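/- arXiv:1507.00551 — 5 statements merged into one kernel-verified Lean document; each statement's English description precedes it below -/
import Mathlib

section
/- Let f : ℝ₊ × X → X be a continuous semiflow on a metric space X and x ∈ X a point whose orbit closure is compact. Then there exists a minimal center of attraction of the motion f(t,x): a closed set C ⊆ X such that for every ε > 0 the set {t ≥ 0 : f(t,x) ∈ B_ε(C)} has density 1 in [0,∞), and no proper closed subset of C has this property. -/
open MeasureTheory Filter Metric Set Topology
open scoped Classical

noncomputable section

/-- The set `S ⊆ ℝ` has density `α` in `[0,∞)`. -/
def HasDens (S : Set ℝ) (α : ℝ) : Prop :=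
  Filter.Tendsto (fun T : ℝ => (MeasureTheory.volume (S ∩ Set.Icc 0 T)).toReal / T)
    Filter.atTop (nhds α)

/-- `f` is a continuous semiflow on `X` (time in `[0,∞)`). -/
def IsSemiflow {X : Type*} [MetricSpace X] (f : ℝ → X → X) : Prop :=
  ContinuousOn (fun p : ℝ × X => f p.1 p.2) (Set.Ici 0 ×ˢ Set.univ) ∧
  (∀ x : X, f 0 x = x) ∧
  (∀ s t : ℝ, 0 ≤ s → 0 ≤ t → ∀ x : X, f s (f t x) = f (s + t) x)

/-- `C` is a center of attraction of the motion `f (t, x)`. -/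
def IsCtr {X : Type*} [MetricSpace X] (f : ℝ → X → X) (x : X) (C : Set X) : Prop :=
  IsClosed C ∧ ∀ ε > (0 : ℝ), HasDens {t : ℝ | 0 ≤ t ∧ f t x ∈ Metric.thickening ε C} 1

/-- `C` is the minimal center of attraction of the motion `f (t, x)`. -/
def IsMCA {X : Type*} [MetricSpace X] (f : ℝ → X → X) (x : X) (C : Set X) : Prop :=
  IsCtr f x C ∧ ∀ C' ⊆ C, IsCtr f x C' → C' = C

/-!
Zorn's lemma, applied downwards to the centers of attraction contained in the compact orbit
closure `K` (which is itself a center). The intersection of a chain of such centers is again a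
center: by compactness some member of the chain lies in the `ε/2`-thickening of the
intersection, and a set containing a density-one set has density one.
-/

theorem HasDens.mono_one {S S' : Set ℝ} (hS : HasDens S 1) (h : S ⊆ S') : HasDens S' 1 := by
  refine tendsto_of_tendsto_of_tendsto_of_le_of_le' hS tendsto_const_nhds ?_ ?_ <;>
    filter_upwards [eventually_gt_atTop 0] with T hT
  · gcongr (?_ : ℝ) / T
    exact measureReal_mono (inter_subset_inter_left _ h)
      (measure_ne_top_of_subset inter_subset_right measure_Icc_lt_top.ne)
  · rw [div_le_one hT]
    calc volume.real (S' ∩ Icc 0 T) ≤ volume.real (Icc 0 T) :=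
          measureReal_mono inter_subset_right measure_Icc_lt_top.ne
      _ = T := by simp [hT.le]

theorem hasDens_Ici_zero : HasDens (Ici 0) 1 := by
  refine tendsto_const_nhds.congr' ?_
  filter_upwards [eventually_gt_atTop 0] with T hT
  simp [inter_eq_self_of_subset_right Icc_subset_Ici_self, hT.le, hT.ne']

theorem IsChain.exists_subset_thickening_sInter {X : Type*} [PseudoMetricSpace X] [T2Space X]
    {c : Set (Set X)} (hc : IsChain (· ⊆ ·) c) (hne : c.Nonempty)
    (hcpt : ∀ s ∈ c, IsCompact s) {ε : ℝ} (hε : 0 < ε) :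
    ∃ s ∈ c, s ⊆ thickening ε (⋂₀ c) := by
  have : Nonempty c := hne.to_subtype
  have hdir : Directed (· ⊇ ·) ((↑) : c → Set X) :=
    directedOn_iff_directed.1 (IsChain.directedOn (r := fun s t : Set X => s ⊇ t) hc.symm)
  obtain ⟨⟨s, hs⟩, hsub⟩ := exists_subset_nhds_of_isCompact (V := ((↑) : c → Set X))
    hdir (fun s => hcpt s s.2) (U := thickening ε (⋂₀ c)) fun y hy =>
      isOpen_thickening.mem_nhds (self_subset_thickening hε _ (by rwa [sInter_eq_iInter]))
  exact ⟨s, hs, hsub⟩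

section
variable {X : Type*} [MetricSpace X] {f : ℝ → X → X} {x : X}

theorem isCtr_of_forall_mem {C : Set X} (hC : IsClosed C) (hfC : ∀ t, 0 ≤ t → f t x ∈ C) :
    IsCtr f x C :=
  ⟨hC, fun _ hε => hasDens_Ici_zero.mono_one fun t ht =>
    ⟨ht, self_subset_thickening hε C (hfC t ht)⟩⟩

theorem isCtr_sInter_of_isChain {c : Set (Set X)} (hc : IsChain (· ⊆ ·) c) (hne : c.Nonempty)
    (hcpt : ∀ s ∈ c, IsCompact s) (hctr : ∀ s ∈ c, IsCtr f x s) : IsCtr f x (⋂₀ c) := by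
  refine ⟨isClosed_sInter fun s hs => (hctr s hs).1, fun ε hε => ?_⟩
  obtain ⟨s, hs, hsub⟩ := hc.exists_subset_thickening_sInter hne hcpt (half_pos hε)
  refine ((hctr s hs).2 (ε / 2) (half_pos hε)).mono_one fun t ⟨ht, hts⟩ => ⟨ht, ?_⟩
  have := thickening_thickening_subset (ε / 2) (ε / 2) (⋂₀ c)
  rw [add_halves] at this
  exact this (thickening_subset_of_subset _ hsub hts)

end

theorem exists_minimal_center_of_attraction_general {X : Type*} [MetricSpace X]
    (f : ℝ → X → X) (x : X)
    (hx : IsCompact (closure {y : X | ∃ t : ℝ, 0 ≤ t ∧ f t x = y})) :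
    ∃ C : Set X, IsMCA f x C := by
  set K := closure {y : X | ∃ t : ℝ, 0 ≤ t ∧ f t x = y}
  have hK : IsCtr f x K :=
    isCtr_of_forall_mem isClosed_closure fun t ht => subset_closure ⟨t, ht, rfl⟩
  have hchain : ∀ c ⊆ {C | IsCtr f x C ∧ C ⊆ K}, IsChain (· ⊆ ·) c → c.Nonempty →
      ∃ D ∈ {C | IsCtr f x C ∧ C ⊆ K}, ∀ s ∈ c, D ⊆ s := by
    intro c hcK hc hne
    have hcpt : ∀ s ∈ c, IsCompact s := fun s hs =>
      hx.of_isClosed_subset (hcK hs).1.1 (hcK hs).2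
    refine ⟨⋂₀ c, ⟨isCtr_sInter_of_isChain hc hne hcpt fun s hs => (hcK hs).1, ?_⟩,
      fun _ => sInter_subset_of_mem⟩
    exact (sInter_subset_of_mem hne.some_mem).trans (hcK hne.some_mem).2
  obtain ⟨C, -, hCmin⟩ := zorn_superset_nonempty _ hchain K ⟨hK, subset_rfl⟩
  exact ⟨C, hCmin.prop.1, fun C' hC'C hC' =>
    hC'C.antisymm (hCmin.le_of_le ⟨hC', hC'C.trans hCmin.prop.2⟩ hC'C)⟩

theorem exists_minimal_center_of_attraction {X : Type*} [MetricSpace X]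
    (f : ℝ → X → X) (hf : IsSemiflow f) (x : X)
    (hx : IsCompact (closure {y : X | ∃ t : ℝ, 0 ≤ t ∧ f t x = y})) :
    ∃ C : Set X, IsMCA f x C :=
  exists_minimal_center_of_attraction_general f x hx
end
end

section
/- Let f : ℝ₊ × X → X be a continuous semiflow on a metric space X, x ∈ X, and C_x the minimal center of attraction of the motion f(t,x). Then C_x equals the set of points y ∈ X such that for every neighborhood U of y, limsup_{T→∞} (1/T) ∫₀^T 1_U(f(t,x)) dt > 0. -/
open MeasureTheory Filter Metric Set Topology
open scoped Classical

noncomputable section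

/-!
If `y ∉ C`, a ball around `y` is disjoint from a thickening of the closed center `C`, which the
motion visits with density one; so the ball is visited with density zero. Conversely, if some
neighbourhood `U` of `y ∈ C` were visited with density zero, then removing a small ball around `y`
from `C` would still leave a center of attraction, since time spent near the removed ball is time
spent in `U`; this contradicts the minimality of `C`.
-/

def densityRatio (S : Set ℝ) (T : ℝ) : ℝ := (volume (S ∩ Icc 0 T)).toReal / T

theorem hasDens_iff_tendsto {S : Set ℝ} {α : ℝ} :
    HasDens S α ↔ Tendsto (densityRatio S) atTop (𝓝 α) := Iff.rfl

section densityRatio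

variable {S A B : Set ℝ}

theorem volume_inter_Icc_ne_top (S : Set ℝ) (T : ℝ) : volume (S ∩ Icc 0 T) ≠ ⊤ :=
  ne_top_of_le_ne_top (by simp [Real.volume_Icc]) (measure_mono inter_subset_right)

theorem densityRatio_of_nonpos (S : Set ℝ) {T : ℝ} (hT : T ≤ 0) : densityRatio S T = 0 := by
  have : volume (S ∩ Icc 0 T) = 0 :=
    measure_mono_null inter_subset_right (by simp [Real.volume_Icc, hT])
  simp [densityRatio, this]

theorem densityRatio_nonneg (S : Set ℝ) (T : ℝ) : 0 ≤ densityRatio S T := by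
  rcases le_or_gt T 0 with hT | hT
  · rw [densityRatio_of_nonpos S hT]
  · exact div_nonneg ENNReal.toReal_nonneg hT.le

theorem densityRatio_le_one (S : Set ℝ) (T : ℝ) : densityRatio S T ≤ 1 := by
  rcases le_or_gt T 0 with hT | hT
  · rw [densityRatio_of_nonpos S hT]; exact zero_le_one
  · rw [densityRatio, div_le_one hT]
    refine ENNReal.toReal_le_of_le_ofReal hT.le ((measure_mono inter_subset_right).trans ?_)
    simp [Real.volume_Icc]

theorem densityRatio_mono (h : A ⊆ B) (T : ℝ) : densityRatio A T ≤ densityRatio B T := by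
  rcases le_or_gt T 0 with hT | hT
  · simp [densityRatio_of_nonpos _ hT]
  refine div_le_div_of_nonneg_right ?_ hT.le
  exact ENNReal.toReal_mono (volume_inter_Icc_ne_top B T)
    (measure_mono (inter_subset_inter_left _ h))

theorem densityRatio_union_le (A B : Set ℝ) (T : ℝ) :
    densityRatio (A ∪ B) T ≤ densityRatio A T + densityRatio B T := by
  rcases le_or_gt T 0 with hT | hT
  · simp [densityRatio_of_nonpos _ hT]
  rw [densityRatio, densityRatio, densityRatio, ← add_div, union_inter_distrib_right,
    ← ENNReal.toReal_add (volume_inter_Icc_ne_top A T) (volume_inter_Icc_ne_top B T)]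
  refine div_le_div_of_nonneg_right ?_ hT.le
  exact ENNReal.toReal_mono
    (ENNReal.add_ne_top.2 ⟨volume_inter_Icc_ne_top A T, volume_inter_Icc_ne_top B T⟩)
    (measure_union_le _ _)

theorem densityRatio_le_one_sub_of_disjoint (hA : MeasurableSet A) (hAB : Disjoint A B)
    (T : ℝ) : densityRatio B T ≤ 1 - densityRatio A T := by
  rcases le_or_gt T 0 with hT | hT
  · simp [densityRatio_of_nonpos _ hT]
  have hsum : (volume (A ∩ Icc 0 T)).toReal + (volume (B ∩ Icc 0 T)).toReal ≤ T := by
    rw [← ENNReal.toReal_add (volume_inter_Icc_ne_top A T) (volume_inter_Icc_ne_top B T),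
      ← measure_union' (hAB.mono inter_subset_left inter_subset_left)
        (hA.inter measurableSet_Icc)]
    refine ENNReal.toReal_le_of_le_ofReal hT.le
      ((measure_mono (union_subset inter_subset_right inter_subset_right)).trans_eq ?_)
    simp [Real.volume_Icc]
  rw [densityRatio, densityRatio, div_le_iff₀ hT, sub_mul, one_mul, div_mul_cancel₀ _ hT.ne']
  linarith

theorem tendsto_densityRatio_zero_of_disjoint (hA : MeasurableSet A)
    (hA1 : Tendsto (densityRatio A) atTop (𝓝 1)) (hAB : Disjoint A B) :
    Tendsto (densityRatio B) atTop (𝓝 0) := by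
  exact tendsto_of_tendsto_of_tendsto_of_le_of_le tendsto_const_nhds
    (by simpa using hA1.const_sub 1) (densityRatio_nonneg B)
    (densityRatio_le_one_sub_of_disjoint hA hAB)

theorem zero_lt_limsup_densityRatio_iff :
    0 < limsup (densityRatio S) atTop ↔ ¬ Tendsto (densityRatio S) atTop (𝓝 0) := by
  refine ⟨fun hpos h0 => hpos.ne' h0.limsup_eq, fun hnot => ?_⟩
  by_contra! hle
  have hbdd : IsBoundedUnder (· ≤ ·) atTop (densityRatio S) :=
    isBoundedUnder_of ⟨1, densityRatio_le_one S⟩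
  have hbdd' : IsBoundedUnder (· ≥ ·) atTop (densityRatio S) :=
    isBoundedUnder_of ⟨0, densityRatio_nonneg S⟩
  exact hnot <| tendsto_of_le_liminf_of_limsup_le
    (le_liminf_of_le hbdd.isCoboundedUnder_ge (.of_forall (densityRatio_nonneg S))) hle hbdd hbdd'

end densityRatio

theorem volume_sep_Icc_div_eq_densityRatio {X : Type*} (γ : ℝ → X) (U : Set X) (T : ℝ) :
    (volume {t ∈ Icc 0 T | γ t ∈ U}).toReal / T = densityRatio (γ ⁻¹' U) T := by
  have : {t ∈ Icc 0 T | γ t ∈ U} = γ ⁻¹' U ∩ Icc 0 T := by ext t; exact and_comm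
  rw [densityRatio, this]

theorem measurableSet_setOf_nonneg_and_mem {X : Type*} [TopologicalSpace X] {γ : ℝ → X}
    (hγ : ContinuousOn γ (Ici 0)) {O : Set X} (hO : IsOpen O) :
    MeasurableSet {t | 0 ≤ t ∧ γ t ∈ O} := by
  obtain ⟨u, hu, hequ⟩ := continuousOn_iff'.1 hγ O hO
  have : {t | 0 ≤ t ∧ γ t ∈ O} = u ∩ Ici 0 := by
    rw [← hequ, inter_comm]
    rfl
  exact this ▸ hu.measurableSet.inter measurableSet_Ici

theorem IsSemiflow.continuousOn_orbit {X : Type*} [MetricSpace X] {f : ℝ → X → X}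
    (hf : IsSemiflow f) (x : X) : ContinuousOn (fun t => f t x) (Ici 0) :=
  hf.1.comp (continuous_id.prodMk continuous_const).continuousOn fun _ ht => ⟨ht, mem_univ x⟩

theorem thickening_subset_thickening_sdiff_ball_union_ball {X : Type*} [PseudoMetricSpace X]
    {δ ε s r : ℝ} (hδε : δ ≤ ε) (hδr : δ + s ≤ r) (C : Set X) (y : X) :
    thickening δ C ⊆ thickening ε (C \ ball y s) ∪ ball y r := by
  intro z hz
  obtain ⟨c, hc, hzc⟩ := mem_thickening_iff.1 hz
  by_cases hcy : c ∈ ball y s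
  · right
    calc dist z y ≤ dist z c + dist c y := dist_triangle _ _ _
      _ < δ + s := add_lt_add hzc hcy
      _ ≤ r := hδr
  · exact .inl (mem_thickening_iff.2 ⟨c, ⟨hc, hcy⟩, hzc.trans_le hδε⟩)

section IsCtr

variable {X : Type*} [MetricSpace X] {f : ℝ → X → X} {x : X} {C : Set X}

theorem IsCtr.sdiff_ball (hC : IsCtr f x C) {y : X} {r : ℝ} (hr : 0 < r) {U : Set X}
    (hU : ball y r ⊆ U)
    (hU0 : Tendsto (densityRatio ((fun t => f t x) ⁻¹' U)) atTop (𝓝 0)) :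
    IsCtr f x (C \ ball y (r / 2)) := by
  refine ⟨hC.1.sdiff isOpen_ball, fun ε hε => hasDens_iff_tendsto.2 ?_⟩
  set δ := min ε (r / 2)
  have hδr : δ + r / 2 ≤ r := by linarith [min_le_right ε (r / 2)]
  have hcover : {t | 0 ≤ t ∧ f t x ∈ thickening δ C} ⊆
      {t | 0 ≤ t ∧ f t x ∈ thickening ε (C \ ball y (r / 2))} ∪ (fun t => f t x) ⁻¹' U := by
    rintro t ⟨ht, hδ⟩
    rcases thickening_subset_thickening_sdiff_ball_union_ball (min_le_left ε (r / 2)) hδr C y hδ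
      with h | h
    exacts [.inl ⟨ht, h⟩, .inr (hU h)]
  have hδ1 : Tendsto (densityRatio {t | 0 ≤ t ∧ f t x ∈ thickening δ C}) atTop (𝓝 1) :=
    hasDens_iff_tendsto.1 (hC.2 δ (lt_min hε (half_pos hr)))
  refine tendsto_of_tendsto_of_tendsto_of_le_of_le (by simpa using hδ1.sub hU0)
    tendsto_const_nhds (fun T => ?_) (densityRatio_le_one _)
  linarith [(densityRatio_mono hcover T).trans (densityRatio_union_le _ _ T)]

theorem IsCtr.exists_mem_nhds_tendsto_densityRatio_zero (hC : IsCtr f x C)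
    (hγ : ContinuousOn (fun t => f t x) (Ici 0)) {y : X} (hy : y ∉ C) :
    ∃ U ∈ 𝓝 y, Tendsto (densityRatio ((fun t => f t x) ⁻¹' U)) atTop (𝓝 0) := by
  obtain ⟨ε, hε, hεC⟩ := Metric.mem_nhds_iff.1 (hC.1.isOpen_compl.mem_nhds hy)
  refine ⟨ball y (ε / 2), ball_mem_nhds y (half_pos hε),
    tendsto_densityRatio_zero_of_disjoint
      (measurableSet_setOf_nonneg_and_mem hγ isOpen_thickening)
      (hasDens_iff_tendsto.1 (hC.2 _ (half_pos hε))) ?_⟩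
  refine disjoint_left.2 fun t ⟨_, ht⟩ hty => ?_
  obtain ⟨c, hc, htc⟩ := mem_thickening_iff.1 ht
  refine hεC (mem_ball.2 ?_) hc
  calc dist c y ≤ dist c (f t x) + dist (f t x) y := dist_triangle _ _ _
    _ < ε / 2 + ε / 2 := add_lt_add (by rwa [dist_comm]) hty
    _ = ε := add_halves ε

end IsCtr

theorem mca_eq_interesting_points {X : Type*} [MetricSpace X]
    (f : ℝ → X → X) (hf : IsSemiflow f) (x : X) (C : Set X) (hC : IsMCA f x C) :
    C = {y : X | ∀ U ∈ nhds y,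
      0 < Filter.limsup
        (fun T : ℝ => (MeasureTheory.volume {t ∈ Set.Icc 0 T | f t x ∈ U}).toReal / T)
        Filter.atTop} := by
  ext y
  simp only [mem_ofPred_eq, volume_sep_Icc_div_eq_densityRatio (fun t => f t x),
    zero_lt_limsup_densityRatio_iff]
  constructor
  · intro hy U hU hU0
    obtain ⟨r, hr, hrU⟩ := Metric.mem_nhds_iff.1 hU
    have hcut := hC.2 _ sdiff_subset (hC.1.sdiff_ball hr hrU hU0)
    exact (hcut ▸ hy).2 (mem_ball_self (half_pos hr))
  · intro hy
    by_contra hyC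
    obtain ⟨U, hU, hU0⟩ :=
      hC.1.exists_mem_nhds_tendsto_densityRatio_zero (hf.continuousOn_orbit x) hyC
    exact hy U hU hU0
end
end

section
/- Let T : X → X be a continuous map of a Polish space X. If there exists x̂ ∈ X such that the minimal center of attraction of the orbit of x̂ equals X, then the set of points x ∈ X whose minimal center of attraction equals X is residual in X. -/
/-!
If the orbit of `xhat` visited some nonempty open set `U` with upper density zero, `Uᶜ` would
be a smaller center of attraction. Hence `xhat` visits each set `U` of a countable basis with
upper density above some `c_U > 0`. Visiting `U` with upper density above `c_U / 2` is a `G_δ`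
condition, since visit frequencies are lower semicontinuous in the starting point, and it holds
along the whole orbit of `xhat`, which is dense; so the points satisfying it for every `U` form a
residual set. Such a point has no proper closed center of attraction `C`: a small ball missing
the `ε`-thickening of `C` would be visited with density zero.
-/

open MeasureTheory Filter Metric Set Topology
open scoped Classical

noncomputable section

/-- Discrete-time center of attraction. -/
def IsCtrD {X : Type*} [MetricSpace X] (T : X → X) (x : X) (C : Set X) : Prop :=
  IsClosed C ∧ ∀ ε > (0 : ℝ),
    Filter.Tendsto
      (fun N : ℕ =>
        (((Finset.range N).filter (fun n : ℕ => T^[n] x ∈ Metric.thickening ε C)).card : ℝ) / N)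
      Filter.atTop (nhds 1)

/-- Discrete-time minimal center of attraction. -/
def IsMCAD {X : Type*} [MetricSpace X] (T : X → X) (x : X) (C : Set X) : Prop :=
  IsCtrD T x C ∧ ∀ C' ⊆ C, IsCtrD T x C' → C' = C

section Visits

variable {X : Type*} {T : X → X} {U V : Set X} {x : X} {N : ℕ}

def visitCount (T : X → X) (U : Set X) (x : X) (N : ℕ) : ℕ :=
  ((Finset.range N).filter (fun n => T^[n] x ∈ U)).card

def visitFreq (T : X → X) (U : Set X) (x : X) (N : ℕ) : ℝ :=
  visitCount T U x N / N

lemma visitCount_le : visitCount T U x N ≤ N :=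
  (Finset.card_filter_le _ _).trans (Finset.card_range N).le

lemma visitFreq_nonneg : 0 ≤ visitFreq T U x N := by
  unfold visitFreq; positivity

lemma visitFreq_le_one : visitFreq T U x N ≤ 1 :=
  div_le_one_of_le₀ (Nat.cast_le.mpr visitCount_le) N.cast_nonneg

lemma visitFreq_mono (h : U ⊆ V) : visitFreq T U x N ≤ visitFreq T V x N := by
  unfold visitFreq visitCount
  gcongr

lemma visitFreq_add_visitFreq_compl (hN : N ≠ 0) :
    visitFreq T U x N + visitFreq T Uᶜ x N = 1 := by
  unfold visitFreq visitCount
  rw [← add_div, div_eq_one_iff_eq (by exact_mod_cast hN)]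
  simp only [Set.mem_compl_iff]
  exact_mod_cast (Finset.card_range N ▸ Finset.card_filter_add_card_filter_not _)

lemma visitFreq_univ (hN : N ≠ 0) : visitFreq T univ x N = 1 := by
  simp [visitFreq, visitCount, hN]

lemma exists_iterate_mem_of_visitFreq_pos (h : 0 < visitFreq T U x N) : ∃ n, T^[n] x ∈ U := by
  obtain ⟨n, hn⟩ := Finset.card_pos.mp (Nat.cast_pos.mp (pos_of_mul_pos_left h (by positivity)))
  exact ⟨n, (Finset.mem_filter.mp hn).2⟩

/-- A visit of `x` at a time `n ≥ j` is a visit of `T^[j] x` at time `n - j`. -/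
lemma visitCount_le_add_visitCount_iterate (j : ℕ) :
    visitCount T U x N ≤ j + visitCount T U (T^[j] x) N := by
  set later := (Finset.range N).filter (fun n => T^[n] (T^[j] x) ∈ U)
  have hsub : (Finset.range N).filter (fun n => T^[n] x ∈ U) ⊆
      Finset.range j ∪ later.image (· + j) := by
    intro n hn
    rw [Finset.mem_filter, Finset.mem_range] at hn
    rcases lt_or_ge n j with hnj | hjn
    · exact Finset.mem_union_left _ (Finset.mem_range.mpr hnj)
    · refine Finset.mem_union_right _ (Finset.mem_image.mpr ⟨n - j, ?_, by omega⟩)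
      rw [Finset.mem_filter, Finset.mem_range, ← Function.iterate_add_apply,
        Nat.sub_add_cancel hjn]
      exact ⟨by omega, hn.2⟩
  calc visitCount T U x N ≤ (Finset.range j ∪ later.image (· + j)).card :=
        Finset.card_le_card hsub
    _ ≤ j + later.card := by
      refine (Finset.card_union_le _ _).trans ?_
      rw [Finset.card_range]
      exact Nat.add_le_add_left Finset.card_image_le j

lemma visitFreq_sub_le_visitFreq_iterate (j : ℕ) :
    visitFreq T U x N - j / N ≤ visitFreq T U (T^[j] x) N := by
  unfold visitFreq
  rw [← sub_div]
  gcongr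
  rw [sub_le_iff_le_add']
  exact_mod_cast visitCount_le_add_visitCount_iterate (T := T) (U := U) (x := x) (N := N) j

lemma frequently_lt_visitFreq_iterate {c c' : ℝ} (h : ∃ᶠ N in atTop, c < visitFreq T U x N)
    (hc : c' < c) (j : ℕ) : ∃ᶠ N in atTop, c' < visitFreq T U (T^[j] x) N := by
  have hsmall : ∀ᶠ N : ℕ in atTop, (j : ℝ) / N < c - c' :=
    (tendsto_const_div_atTop_nhds_zero_nat (j : ℝ)).eventually (gt_mem_nhds (sub_pos.mpr hc))
  refine (h.and_eventually hsmall).mono fun N ⟨hN, hNj⟩ => ?_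
  linarith [visitFreq_sub_le_visitFreq_iterate (T := T) (U := U) (x := x) (N := N) j]

variable [TopologicalSpace X]

lemma lowerSemicontinuous_visitFreq (hT : Continuous T) (hU : IsOpen U) (N : ℕ) :
    LowerSemicontinuous (visitFreq T U · N) := by
  have hsum : (visitFreq T U · N) =
      fun x => ∑ n ∈ Finset.range N, U.indicator (fun _ => (N : ℝ)⁻¹) (T^[n] x) := by
    ext x
    simp only [visitFreq, visitCount, Finset.natCast_card_filter, Finset.sum_div,
      Set.indicator_apply]
    exact Finset.sum_congr rfl fun n _ => by split_ifs <;> simp [div_eq_inv_mul]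
  rw [hsum]
  exact lowerSemicontinuous_sum fun n _ =>
    (hU.lowerSemicontinuous_indicator (by positivity)).comp (hT.iterate n)

lemma isGδ_setOf_frequently_lt_visitFreq (hT : Continuous T) (hU : IsOpen U) (c : ℝ) :
    IsGδ {x | ∃ᶠ N in atTop, c < visitFreq T U x N} := by
  have : {x | ∃ᶠ N in atTop, c < visitFreq T U x N} =
      ⋂ N₀ : ℕ, ⋃ N ≥ N₀, (visitFreq T U · N) ⁻¹' Ioi c := by
    ext x; simp [frequently_atTop]
  rw [this]
  exact IsGδ.iInter_of_isOpen fun N₀ => isOpen_biUnion fun N _ =>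
    (lowerSemicontinuous_visitFreq hT hU N).isOpen_preimage c

end Visits

section Centers

variable {X : Type*} [MetricSpace X] {T : X → X} {U C : Set X} {x : X}

lemma isCtrD_univ : IsCtrD T x univ := by
  refine ⟨isClosed_univ, fun ε hε => tendsto_const_nhds.congr' ?_⟩
  filter_upwards [eventually_ne_atTop 0] with N hN
  rw [eq_univ_of_univ_subset (self_subset_thickening hε univ)]
  exact (visitFreq_univ hN).symm

lemma IsCtrD.tendsto_visitFreq_of_disjoint (hC : IsCtrD T x C) {ε : ℝ} (hε : 0 < ε)
    (hU : Disjoint U (thickening ε C)) : Tendsto (visitFreq T U x) atTop (𝓝 0) := by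
  have hcompl : Tendsto (fun N => 1 - visitFreq T (thickening ε C) x N) atTop (𝓝 0) := by
    have hthick : Tendsto (visitFreq T (thickening ε C) x) atTop (𝓝 1) := hC.2 ε hε
    simpa only [sub_self] using hthick.const_sub 1
  refine tendsto_of_tendsto_of_tendsto_of_le_of_le' tendsto_const_nhds hcompl
    (Eventually.of_forall fun N => visitFreq_nonneg) ?_
  filter_upwards [eventually_ne_atTop 0] with N hN
  rw [← visitFreq_add_visitFreq_compl (T := T) (U := thickening ε C) (x := x) hN,
    add_sub_cancel_left]
  exact visitFreq_mono hU.subset_compl_right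

lemma isCtrD_compl_of_tendsto_visitFreq (hU : IsOpen U)
    (h : Tendsto (visitFreq T U x) atTop (𝓝 0)) : IsCtrD T x Uᶜ := by
  refine ⟨hU.isClosed_compl, fun ε hε => ?_⟩
  have hcompl : Tendsto (fun N => 1 - visitFreq T U x N) atTop (𝓝 1) := by
    simpa only [sub_zero] using h.const_sub 1
  refine tendsto_of_tendsto_of_tendsto_of_le_of_le' hcompl tendsto_const_nhds ?_
    (Eventually.of_forall fun N => visitFreq_le_one)
  filter_upwards [eventually_ne_atTop 0] with N hN
  rw [← visitFreq_add_visitFreq_compl (T := T) (U := U) (x := x) hN, add_sub_cancel_left]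
  exact visitFreq_mono (self_subset_thickening hε _)

theorem isMCAD_univ_iff : IsMCAD T x univ ↔
    ∀ U, IsOpen U → U.Nonempty → ∃ c > 0, ∃ᶠ N in atTop, c < visitFreq T U x N := by
  constructor
  · intro hx U hU ⟨u, hu⟩
    by_contra! hrare
    have hzero : Tendsto (visitFreq T U x) atTop (𝓝 0) := tendsto_order.2
      ⟨fun a ha => Eventually.of_forall fun N => ha.trans_le visitFreq_nonneg,
       fun a ha => (hrare (a / 2) (half_pos ha)).mono fun N hN => hN.trans_lt (half_lt_self ha)⟩
    have hUc : Uᶜ = univ := hx.2 _ (subset_univ _) (isCtrD_compl_of_tendsto_visitFreq hU hzero)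
    exact eq_univ_iff_forall.mp hUc u hu
  · refine fun hvisits => ⟨isCtrD_univ, fun C _ hC => ?_⟩
    by_contra hne
    obtain ⟨p, hp⟩ := (ne_univ_iff_exists_notMem C).mp hne
    obtain ⟨r, hr, hball⟩ := Metric.isOpen_iff.mp hC.1.isOpen_compl p hp
    have hdisj : Disjoint (ball p (r / 2)) (thickening (r / 2) C) := by
      refine Set.disjoint_left.2 fun y hy hyC => ?_
      obtain ⟨z, hz, hyz⟩ := mem_thickening_iff.mp hyC
      refine hball ?_ hz
      rw [mem_ball] at hy ⊢
      linarith [dist_triangle z y p, dist_comm y z]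
    obtain ⟨c, hc, hfreq⟩ := hvisits _ isOpen_ball ⟨p, mem_ball_self (half_pos hr)⟩
    obtain ⟨N, hcN, hNc⟩ := (hfreq.and_eventually <|
      (hC.tendsto_visitFreq_of_disjoint (half_pos hr) hdisj).eventually (gt_mem_nhds hc)).exists
    exact hcN.not_gt hNc

lemma IsMCAD.denseRange_iterate (hx : IsMCAD T x univ) : DenseRange (T^[·] x) := by
  refine dense_iff_inter_open.2 fun U hU hne => ?_
  obtain ⟨c, hc, hfreq⟩ := isMCAD_univ_iff.mp hx U hU hne
  obtain ⟨N, hN⟩ := hfreq.exists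
  obtain ⟨n, hn⟩ := exists_iterate_mem_of_visitFreq_pos (hc.trans hN)
  exact ⟨_, hn, n, rfl⟩

end Centers

theorem sigmund_conjecture_discrete_general {X : Type*} [MetricSpace X]
    [TopologicalSpace.SeparableSpace X]
    (T : X → X) (hT : Continuous T) (xhat : X) (hxhat : IsMCAD T xhat (Set.univ : Set X)) :
    {x : X | IsMCAD T x (Set.univ : Set X)} ∈ residual X := by
  obtain ⟨b, hbc, hbne, hb⟩ := TopologicalSpace.exists_countable_basis X
  have : Countable b := hbc.to_subtype
  choose c hc hfreq using fun U : b =>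
    isMCAD_univ_iff.mp hxhat U (hb.isOpen U.2)
      (nonempty_iff_ne_empty.mpr (ne_of_mem_of_not_mem U.2 hbne))
  have hres : ⋂ U : b, {x | ∃ᶠ N in atTop, c U / 2 < visitFreq T U x N} ∈ residual X :=
    countable_iInter_mem.mpr fun U => residual_of_dense_Gδ
      (isGδ_setOf_frequently_lt_visitFreq hT (hb.isOpen U.2) _)
      (hxhat.denseRange_iterate.mono (range_subset_iff.2 fun j =>
        frequently_lt_visitFreq_iterate (hfreq U) (half_lt_self (hc U)) j))
  refine mem_of_superset hres fun x hx => isMCAD_univ_iff.mpr fun V hV ⟨v, hv⟩ => ?_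
  obtain ⟨W, hW, -, hWV⟩ := hb.exists_subset_of_mem_open hv hV
  exact ⟨c ⟨W, hW⟩ / 2, half_pos (hc _),
    (mem_iInter.mp hx ⟨W, hW⟩).mono fun N hN => hN.trans_le (visitFreq_mono hWV)⟩

theorem sigmund_conjecture_discrete {X : Type*} [MetricSpace X]
    [TopologicalSpace.SeparableSpace X] [CompleteSpace X]
    (T : X → X) (hT : Continuous T) (xhat : X) (hxhat : IsMCAD T xhat (Set.univ : Set X)) :
    {x : X | IsMCAD T x (Set.univ : Set X)} ∈ residual X :=
  sigmund_conjecture_discrete_general T hT xhat hxhat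
end
end

section
/- Let f : ℝ₊ × X → X be a continuous semiflow on a compact metric space X and x ∈ X. If the minimal center of attraction C_x is not generic (i.e., there is no point y with C_y = C_x), then for every nonempty closed f-invariant subset Δ ⊆ C_x there exists q ∈ Δ such that (x, q) is a Li–Yorke chaotic pair: liminf_{t→∞} d(f(t,x), f(t,q)) = 0 and limsup_{t→∞} d(f(t,x), f(t,q)) > 0. -/
open MeasureTheory Filter Metric Set Topology
open scoped Classical

noncomputable section

/-!
Every point of the minimal center `C` is an ω-limit point of `x`: otherwise removing a small
ball around it would leave a smaller center. In the compact space `X → X`, the limits of `f t`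
as `t → ∞` form a closed semigroup under composition, and those sending `x` into the invariant
set `Δ` form a closed subsemigroup, nonempty because `Δ ⊆ C`. By the Ellis–Numakura lemma it
contains an idempotent `u`; take `q = u x ∈ Δ`. Since `u x = u q` and `u` is a limit of the
`f t`, the distance `d(f t x, f t q)` is frequently small. If it also tended to `0`, `x` and `q`
would have the same minimal center, so `C` would be generic.
-/

lemma HasDens.one_of_eventually_imp {S S' : Set ℝ} (h : HasDens S 1)
    (hsub : ∀ᶠ t in atTop, t ∈ S → t ∈ S') : HasDens S' 1 := by
  obtain ⟨T₀, hT₀⟩ := eventually_atTop.1 hsub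
  set M := max T₀ 0
  have hlower : ∀ T, (volume (S ∩ Icc 0 T)).toReal - M ≤ (volume (S' ∩ Icc 0 T)).toReal := by
    intro T
    have hcover : S ∩ Icc 0 T ⊆ (S' ∩ Icc 0 T) ∪ Icc 0 M := by
      rintro t ⟨htS, ht0, htT⟩
      by_cases hge : T₀ ≤ t
      · exact Or.inl ⟨hT₀ t hge htS, ht0, htT⟩
      · exact Or.inr ⟨ht0, (not_le.1 hge).le.trans (le_max_left _ _)⟩
    have hfin : volume ((S' ∩ Icc 0 T) ∪ Icc 0 M) ≠ ⊤ := measure_union_ne_top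
      ((measure_mono inter_subset_right).trans_lt measure_Icc_lt_top).ne measure_Icc_lt_top.ne
    have := (measureReal_mono hcover hfin).trans (measureReal_union_le (μ := volume) _ _)
    rw [Real.volume_real_Icc_of_le (le_max_right _ _), sub_zero] at this
    simp only [measureReal_def] at this
    linarith
  have hupper : ∀ T, 0 < T → (volume (S' ∩ Icc 0 T)).toReal ≤ T := by
    intro T hT
    have := measureReal_mono (μ := volume) (inter_subset_right (s := S') (t := Icc 0 T))
      measure_Icc_lt_top.ne
    rwa [Real.volume_real_Icc_of_le hT.le, sub_zero] at this
  have hM : Tendsto (fun T => (volume (S ∩ Icc 0 T)).toReal / T - M / T) atTop (𝓝 1) := by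
    simpa using h.sub (tendsto_const_nhds.div_atTop tendsto_id)
  refine tendsto_of_tendsto_of_tendsto_of_le_of_le' hM tendsto_const_nhds ?_ ?_
  · filter_upwards [eventually_gt_atTop 0] with T hT
    rw [← sub_div]
    exact div_le_div_of_nonneg_right (hlower T) hT.le
  · filter_upwards [eventually_gt_atTop 0] with T hT
    exact (div_le_one hT).2 (hupper T hT)

lemma MapClusterPt.exists_of_comp {α Y Z : Type*} [TopologicalSpace Y] [CompactSpace Y]
    [TopologicalSpace Z] [T2Space Z] {g : Y → Z} (hg : Continuous g) {F : Filter α}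
    {φ : α → Y} {z : Z} (h : MapClusterPt z F (g ∘ φ)) : ∃ y, MapClusterPt y F φ ∧ g y = z := by
  obtain ⟨U, hUF, hU⟩ := mapClusterPt_iff_ultrafilter.1 h
  obtain ⟨y, -, hy⟩ := isCompact_univ.ultrafilter_le_nhds (U.map φ) (by simp)
  exact ⟨y, (Tendsto.mapClusterPt (u := φ) hy).mono hUF,
    tendsto_nhds_unique ((hg.tendsto y).comp hy) hU⟩

lemma exists_comp_self_eq_of_isCompact {Y : Type*} [TopologicalSpace Y] [T2Space Y]
    {A : Set (Y → Y)} (hne : A.Nonempty) (hA : IsCompact A)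
    (hcomp : ∀ p ∈ A, ∀ q ∈ A, p ∘ q ∈ A) : ∃ u ∈ A, u ∘ u = u := by
  let _ : Semigroup (Y → Y) := { mul := (· ∘ ·), mul_assoc := fun _ _ _ => rfl }
  exact exists_idempotent_in_compact_subsemigroup
    (fun r => continuous_pi fun y => continuous_apply (r y)) A hne hA hcomp

lemma isBoundedUnder_le_dist {α Y : Type*} [PseudoMetricSpace Y] [BoundedSpace Y]
    (l : Filter α) (u v : α → Y) :
    IsBoundedUnder (· ≤ ·) l fun t => dist (u t) (v t) := by
  obtain ⟨C, hC⟩ := boundedSpace_iff.1 ‹_›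
  exact isBoundedUnder_of ⟨C, fun t => hC _ _⟩

lemma isBoundedUnder_ge_dist {α Y : Type*} [PseudoMetricSpace Y] (l : Filter α) (u v : α → Y) :
    IsBoundedUnder (· ≥ ·) l fun t => dist (u t) (v t) :=
  isBoundedUnder_of ⟨0, fun _ => dist_nonneg⟩

section

variable {X : Type*} [MetricSpace X] {f : ℝ → X → X}

lemma IsCtr.of_eventually_mem_thickening {x y : X} {C C' : Set X} (hC : IsCtr f x C)
    (hC' : IsClosed C')
    (h : ∀ ε > 0, ∃ δ > 0, ∀ᶠ t in atTop, f t x ∈ thickening δ C → f t y ∈ thickening ε C') :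
    IsCtr f y C' := by
  refine ⟨hC', fun ε hε => ?_⟩
  obtain ⟨δ, hδ, hxy⟩ := h ε hε
  refine (hC.2 δ hδ).one_of_eventually_imp ?_
  filter_upwards [hxy] with t ht using fun ⟨ht0, hx⟩ => ⟨ht0, ht hx⟩

lemma IsCtr.of_tendsto_dist {x y : X} {C : Set X} (hC : IsCtr f x C)
    (h : Tendsto (fun t => dist (f t x) (f t y)) atTop (𝓝 0)) : IsCtr f y C := by
  refine hC.of_eventually_mem_thickening hC.1 fun ε hε => ⟨ε / 2, half_pos hε, ?_⟩
  filter_upwards [(tendsto_order.1 h).2 (ε / 2) (half_pos hε)] with t ht hx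
  have : f t y ∈ thickening (ε / 2) (thickening (ε / 2) C) :=
    mem_thickening_iff.2 ⟨f t x, hx, by rwa [dist_comm]⟩
  simpa using thickening_thickening_subset _ _ C this

lemma IsMCA.of_tendsto_dist {x y : X} {C : Set X} (hC : IsMCA f x C)
    (h : Tendsto (fun t => dist (f t x) (f t y)) atTop (𝓝 0)) : IsMCA f y C :=
  ⟨hC.1.of_tendsto_dist h, fun C' hC'C hC' =>
    hC.2 C' hC'C (hC'.of_tendsto_dist (by simpa only [dist_comm] using h))⟩

lemma IsMCA.mapClusterPt {x z : X} {C : Set X} (hC : IsMCA f x C) (hz : z ∈ C) :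
    MapClusterPt z atTop fun t => f t x := by
  by_contra hcl
  obtain ⟨ε, hε, hfar⟩ : ∃ ε > 0, ∀ᶠ t in atTop, ε ≤ dist (f t x) z := by
    simpa [nhds_basis_ball.mapClusterPt_iff_frequently, not_frequently] using hcl
  have hctr : IsCtr f x (C \ ball z (ε / 2)) := by
    refine hC.1.of_eventually_mem_thickening (hC.1.1.sdiff isOpen_ball) fun δ hδ =>
      ⟨min δ (ε / 2), lt_min hδ (half_pos hε), ?_⟩
    filter_upwards [hfar] with t ht hx
    obtain ⟨c, hc, hd⟩ := mem_thickening_iff.1 hx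
    refine mem_thickening_iff.2 ⟨c, ⟨hc, fun hcz => ?_⟩, hd.trans_le (min_le_left _ _)⟩
    linarith [mem_ball.1 hcz, min_le_right δ (ε / 2), dist_triangle (f t x) c z]
  have hzC : z ∈ C \ ball z (ε / 2) := (hC.2 _ sdiff_subset hctr).symm ▸ hz
  exact hzC.2 (mem_ball_self (half_pos hε))

lemma IsSemiflow.continuous (hf : IsSemiflow f) {t : ℝ} (ht : 0 ≤ t) : Continuous (f t) :=
  continuousOn_univ.1 <|
    hf.1.comp (Continuous.prodMk_right t).continuousOn fun _ _ => ⟨ht, mem_univ _⟩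

/-- `X → X` carries the topology of pointwise convergence, so these are the limits of `f t` along
nets `t → ∞`: the ω-limit part of the Ellis semigroup of the semiflow. -/
def ellisOmega (f : ℝ → X → X) : Set (X → X) := {p | MapClusterPt p atTop f}

lemma mem_ellisOmega {p : X → X} : p ∈ ellisOmega f ↔ MapClusterPt p atTop f := Iff.rfl

lemma isClosed_ellisOmega : IsClosed (ellisOmega f) := isClosed_setOfPred_clusterPt

lemma mapsTo_of_mem_ellisOmega {Δ : Set X} (hΔ : IsClosed Δ)
    (hinv : ∀ t : ℝ, 0 ≤ t → ∀ z ∈ Δ, f t z ∈ Δ) {p : X → X} (hp : p ∈ ellisOmega f) :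
    MapsTo p Δ Δ := fun z hz =>
  hΔ.mem_of_mapClusterPt
    ((mem_ellisOmega.1 hp).tendsto_comp ((continuous_apply z).tendsto p))
    ((eventually_ge_atTop 0).mono fun t ht => hinv t ht z hz)

lemma IsSemiflow.comp_mem_ellisOmega (hf : IsSemiflow f) {p q : X → X} (hp : p ∈ ellisOmega f)
    (hq : q ∈ ellisOmega f) : p ∘ q ∈ ellisOmega f := by
  have hshift : ∀ t, 0 ≤ t → f t ∘ q ∈ ellisOmega f := by
    intro t ht
    have hcl : MapClusterPt (f t ∘ q) atTop ((f t ∘ ·) ∘ f) :=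
      (mem_ellisOmega.1 hq).tendsto_comp
        ((continuous_pi fun y => (hf.continuous ht).comp (continuous_apply y)).tendsto q)
    refine MapClusterPt.of_comp (tendsto_atTop_add_const_left atTop t tendsto_id) (hcl.congrFun ?_)
    filter_upwards [eventually_ge_atTop 0] with s hs
    funext y
    exact hf.2.2 t s ht hs y
  exact isClosed_ellisOmega.mem_of_mapClusterPt
    ((mem_ellisOmega.1 hp).tendsto_comp
      ((continuous_pi fun y => continuous_apply (q y)).tendsto p))
    ((eventually_ge_atTop (0 : ℝ)).mono hshift)

lemma IsSemiflow.exists_idempotent_mem_ellisOmega [CompactSpace X] (hf : IsSemiflow f)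
    {Δ : Set X} (hΔ : IsClosed Δ) (hinv : ∀ t : ℝ, 0 ≤ t → ∀ z ∈ Δ, f t z ∈ Δ) {x z : X}
    (hz : z ∈ Δ) (hzx : MapClusterPt z atTop fun t => f t x) :
    ∃ u ∈ ellisOmega f, u x ∈ Δ ∧ u ∘ u = u := by
  obtain ⟨p, hp, rfl⟩ :=
    MapClusterPt.exists_of_comp (g := fun g : X → X => g x) (continuous_apply x) hzx
  obtain ⟨u, ⟨hu, hux⟩, huu⟩ :=
    exists_comp_self_eq_of_isCompact (A := ellisOmega f ∩ {g | g x ∈ Δ}) ⟨p, hp, hz⟩ (isClosed_ellisOmega.inter (hΔ.preimage (continuous_apply x))).isCompact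
    fun p ⟨hp, _⟩ q ⟨hq, hqx⟩ =>
      ⟨hf.comp_mem_ellisOmega hp hq, mapsTo_of_mem_ellisOmega hΔ hinv hp hqx⟩
  exact ⟨u, hu, hux, huu⟩

lemma liminf_dist_eq_zero_of_mem_ellisOmega [BoundedSpace X] {u : X → X} (hu : u ∈ ellisOmega f)
    {x y : X} (hxy : u x = u y) : liminf (fun t => dist (f t x) (f t y)) atTop = 0 := by
  have h0 : MapClusterPt 0 atTop fun t => dist (f t x) (f t y) := by
    simpa [hxy, Function.comp_def] using (mem_ellisOmega.1 hu).tendsto_comp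
      (((continuous_apply x).dist (continuous_apply y)).tendsto u)
  exact le_antisymm (h0.liminf_le (isBoundedUnder_ge_dist _ _ _))
    (le_liminf_of_le (isBoundedUnder_le_dist _ _ _).isCoboundedUnder_ge
      (Eventually.of_forall fun _ => dist_nonneg))

end

theorem liYorke_pair_of_not_generic {X : Type*} [MetricSpace X] [CompactSpace X]
    (f : ℝ → X → X) (hf : IsSemiflow f) (x : X) (C : Set X) (hC : IsMCA f x C)
    (hng : ¬ ∃ y ∈ C, IsMCA f y C) :
    ∀ Δ ⊆ C, Δ.Nonempty → IsClosed Δ → (∀ t : ℝ, 0 ≤ t → ∀ z ∈ Δ, f t z ∈ Δ) →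
      ∃ q ∈ Δ,
        Filter.liminf (fun t : ℝ => dist (f t x) (f t q)) Filter.atTop = 0 ∧
        0 < Filter.limsup (fun t : ℝ => dist (f t x) (f t q)) Filter.atTop := by
  intro Δ hΔC ⟨z, hz⟩ hΔ hinv
  obtain ⟨u, hu, huΔ, huu⟩ :=
    hf.exists_idempotent_mem_ellisOmega hΔ hinv hz (hC.mapClusterPt (hΔC hz))
  have hliminf := liminf_dist_eq_zero_of_mem_ellisOmega hu (congrFun huu x).symm
  refine ⟨u x, huΔ, hliminf, lt_of_not_ge fun hlimsup => hng ⟨u x, hΔC huΔ, ?_⟩⟩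
  exact hC.of_tendsto_dist (tendsto_of_le_liminf_of_limsup_le hliminf.ge hlimsup
    (isBoundedUnder_le_dist _ _ _) (isBoundedUnder_ge_dist _ _ _))
end
end

section
/- Let f : ℝ₊ × X → X be a continuous semiflow on a Polish space X, x ∈ X a point with precompact orbit, and C_x its minimal center of attraction. Then for any l ∈ ℕ, any positive reals t₁, …, t_l and any ε > 0, lim_{T→∞} (1/T) ∫₀^T ∏_{i=1}^{l} 1_{B_ε(C_x)}(f(t_i · t, x)) dt = 1. -/
open MeasureTheory Filter Metric Set Topology
open scoped Classical

noncomputable section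

/-
The set of times `t ≥ 0` with `f (tᵢ t, x) ∈ B_ε(C)` is the preimage under `t ↦ tᵢ t` of a set
of density one, and density is invariant under such rescalings. A finite intersection of measurable
sets of density one again has density one (inclusion–exclusion inside `[0, T]`), and the integrand
is the indicator of that intersection.
-/

namespace HasDens

lemma univ : HasDens Set.univ 1 := by
  refine tendsto_const_nhds.congr' ?_
  filter_upwards [eventually_gt_atTop (0 : ℝ)] with T hT
  rw [Set.univ_inter, Real.volume_Icc, ENNReal.toReal_ofReal (by linarith), sub_zero,
    div_self hT.ne']

lemma inter {A B : Set ℝ} (hA : HasDens A 1) (hB : HasDens B 1) (hBm : MeasurableSet B) :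
    HasDens (A ∩ B) 1 := by
  simp only [HasDens, ← measureReal_def] at *
  have hIcc : Tendsto (fun T : ℝ => volume.real (Icc (0 : ℝ) T) / T) atTop (𝓝 1) := by
    simpa [HasDens, measureReal_def] using HasDens.univ
  have hlower := (hA.add hB).sub hIcc
  rw [show (1 : ℝ) + 1 - 1 = 1 by norm_num] at hlower
  refine tendsto_of_tendsto_of_tendsto_of_le_of_le' hlower hA ?_ ?_
  all_goals filter_upwards [eventually_gt_atTop (0 : ℝ)] with T hT
  · have hfin : ∀ S : Set ℝ, volume (S ∩ Icc 0 T) ≠ ⊤ := fun S =>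
      measure_inter_ne_top_of_right_ne_top measure_Icc_lt_top.ne
    have key : volume.real (A ∩ Icc 0 T) + volume.real (B ∩ Icc 0 T)
        ≤ volume.real (Icc (0 : ℝ) T) + volume.real (A ∩ B ∩ Icc 0 T) := by
      rw [← measureReal_union_add_inter (hBm.inter measurableSet_Icc) (hfin A) (hfin B)]
      exact add_le_add (measureReal_mono (union_subset inter_subset_right inter_subset_right)
          measure_Icc_lt_top.ne)
        (measureReal_mono (fun t ht => ⟨⟨ht.1.1, ht.2.1⟩, ht.1.2⟩) (hfin _))
    rw [← add_div, ← sub_div]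
    gcongr
    linarith
  · gcongr
    · exact measure_inter_ne_top_of_right_ne_top measure_Icc_lt_top.ne
    · exact inter_subset_left

lemma biInter {ι : Type*} (s : Finset ι) {A : ι → Set ℝ} (hA : ∀ i ∈ s, HasDens (A i) 1)
    (hAm : ∀ i ∈ s, MeasurableSet (A i)) : HasDens (⋂ i ∈ s, A i) 1 := by
  induction s using Finset.induction_on with
  | empty => simpa using HasDens.univ
  | insert a s _ ih =>
    simp only [Finset.mem_insert, forall_eq_or_imp] at hA hAm
    rw [Finset.set_biInter_insert, inter_comm]
    exact (ih hA.2 hAm.2).inter hA.1 hAm.1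

lemma preimage_const_mul {S : Set ℝ} {α c : ℝ} (hS : HasDens S α) (hc : 0 < c) :
    HasDens ((c * ·) ⁻¹' S) α := by
  refine (hS.comp (tendsto_id.const_mul_atTop hc)).congr fun T => ?_
  have hset : (c * ·) ⁻¹' S ∩ Icc 0 T = (c * ·) ⁻¹' (S ∩ Icc 0 (c * T)) := by
    ext t
    simp [mul_nonneg_iff_of_pos_left hc, mul_le_mul_iff_right₀ hc]
  rw [Function.comp_apply, hset, Real.volume_preimage_mul_left hc.ne', ENNReal.toReal_mul,
    ENNReal.toReal_ofReal (abs_nonneg _), abs_of_pos (inv_pos.2 hc), id, mul_comm c⁻¹,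
    ← div_eq_mul_inv, div_div]

lemma tendsto_setIntegral_indicator {S : Set ℝ} {α : ℝ} (hS : HasDens S α)
    (hSm : MeasurableSet S) :
    Tendsto (fun T : ℝ => (∫ t in Icc 0 T, S.indicator 1 t) / T) atTop (𝓝 α) := by
  simpa [HasDens, integral_indicator_one hSm, measureReal_restrict_apply hSm, measureReal_def]
    using hS

end HasDens

lemma measurableSet_inter_preimage_of_continuousOn {α β : Type*} [TopologicalSpace α]
    [MeasurableSpace α] [OpensMeasurableSpace α] [TopologicalSpace β] {g : α → β} {s : Set α}
    (hg : ContinuousOn g s) (hs : MeasurableSet s) {U : Set β} (hU : IsOpen U) :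
    MeasurableSet (s ∩ g ⁻¹' U) := by
  obtain ⟨u, hu, hsu⟩ := continuousOn_iff'.mp hg U hU
  rw [inter_comm, hsu]
  exact hu.measurableSet.inter hs

theorem mca_multiply_attracting_general {X : Type*} [MetricSpace X]
    (f : ℝ → X → X) (hf : IsSemiflow f) (x : X)
    (C : Set X) (hC : IsMCA f x C)
    (l : ℕ) (ts : Fin l → ℝ) (hts : ∀ i, 0 < ts i) (ε : ℝ) (hε : 0 < ε) :
    Filter.Tendsto
      (fun T : ℝ =>
        (∫ t in Set.Icc (0 : ℝ) T,
          ∏ i : Fin l,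
            Set.indicator (Metric.thickening ε C) (fun _ => (1 : ℝ)) (f (ts i * t) x)) / T)
      Filter.atTop (nhds 1) := by
  set A : Fin l → Set ℝ := fun i => Ici 0 ∩ (fun t => f (ts i * t) x) ⁻¹' thickening ε C
  have hAm (i : Fin l) : MeasurableSet (A i) := by
    refine measurableSet_inter_preimage_of_continuousOn ?_ measurableSet_Ici isOpen_thickening
    exact hf.1.comp (f := fun t => (ts i * t, x)) (by fun_prop)
      fun t ht => ⟨mul_nonneg (hts i).le ht, mem_univ x⟩
  have hA (i : Fin l) : HasDens (A i) 1 := by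
    convert (hC.1.2 ε hε).preimage_const_mul (hts i) using 1
    ext t
    simp [A, mul_nonneg_iff_of_pos_left (hts i)]
  have hK : HasDens (⋂ i ∈ Finset.univ, A i) 1 :=
    HasDens.biInter _ (fun i _ => hA i) (fun i _ => hAm i)
  refine (hK.tendsto_setIntegral_indicator
    (Finset.univ.measurableSet_biInter fun i _ => hAm i)).congr fun T => ?_
  congr 1
  refine setIntegral_congr_fun measurableSet_Icc fun t ht => ?_
  rw [← one_pow (Finset.univ : Finset (Fin l)).card, ← prod_indicator_const_apply]
  simp [A, indicator_apply, ht.1]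

theorem mca_multiply_attracting {X : Type*} [MetricSpace X]
    (f : ℝ → X → X) (hf : IsSemiflow f) (x : X)
    (horb : IsCompact (closure {y : X | ∃ t : ℝ, 0 ≤ t ∧ f t x = y}))
    (C : Set X) (hC : IsMCA f x C)
    (l : ℕ) (ts : Fin l → ℝ) (hts : ∀ i, 0 < ts i) (ε : ℝ) (hε : 0 < ε) :
    Filter.Tendsto
      (fun T : ℝ =>
        (∫ t in Set.Icc (0 : ℝ) T,
          ∏ i : Fin l,
            Set.indicator (Metric.thickening ε C) (fun _ => (1 : ℝ)) (f (ts i * t) x)) / T)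
      Filter.atTop (nhds 1) :=
  mca_multiply_attracting_general f hf x C hC l ts hts ε hε

end
end
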